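/- For n ≥ 4, the affine Eulerian polynomial of type D satisfies D̃ₙ(x) = Σ_{i=0}^{n−2} ((n−i−1)x + i+1)·(x·T_{n−1,i}(x) + T_{n−1,n+i−1}(x)). -/

import Mathlib

/-!
Split off the last entry `k = eₙ` of an inversion sequence `e`. The ascents of the remaining
sequence `e'` are unchanged, and `k` contributes at most two more to `ãsc_D`, the ascent at
position `n - 1` and the affine one, both determined by `j = e'ₙ₋₁` and `k` alone. Summing over
the `2n` choices of `k` therefore gives a weight depending only on `j`, namely
`2x((n-j-1)x + j+1)` for `j ≤ n-2` and `2((n-i-1)x + i+1)` for `j = n-1+i`, and grouping the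
`e'` by their last entry `j` turns the sum into one over the refined polynomials `T_{n-1,j}`.
-/

open Polynomial

/-- `f` has only real zeros (every complex zero is real). -/
def RealRooted (f : Polynomial ℝ) : Prop :=
  ∀ z : ℂ, z ∈ (f.map (algebraMap ℝ ℂ)).roots → z.im = 0

/-- all zeros of `f` are real (counted with multiplicity). -/
def AllRealRoots (f : Polynomial ℝ) : Prop :=
  f.roots.card = f.natDegree

/-- two polynomials are compatible if every nonnegative linear combination
has only real zeros. -/
def Compatible (f g : Polynomial ℝ) : Prop :=
  ∀ c d : ℝ, 0 ≤ c → 0 ≤ d → RealRooted (C c * f + C d * g)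

/-- `Interlaces g f` means `g ⪯ f`: both are real-rooted with positive leading
coefficients, and listing the zeros in decreasing order `u` (of `f`) and `v`
(of `g`), either `deg f = deg g` and `vₙ ≤ uₙ ≤ ⋯ ≤ v₁ ≤ u₁`, or
`deg f = deg g + 1` and `uₙ ≤ vₙ₋₁ ≤ ⋯ ≤ v₁ ≤ u₁`. -/
def Interlaces (g f : Polynomial ℝ) : Prop :=
  0 < f.leadingCoeff ∧ 0 < g.leadingCoeff ∧
  ∃ u v : List ℝ,
    u.Pairwise (· ≥ ·) ∧ v.Pairwise (· ≥ ·) ∧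
    f.roots = (u : Multiset ℝ) ∧ g.roots = (v : Multiset ℝ) ∧
    u.length = f.natDegree ∧ v.length = g.natDegree ∧
    (u.length = v.length ∨ u.length = v.length + 1) ∧
    (∀ (i : ℕ) (hv : i < v.length) (hu : i < u.length),
      v.get ⟨i, hv⟩ ≤ u.get ⟨i, hu⟩) ∧
    (∀ (i : ℕ) (hu : i + 1 < u.length) (hv : i < v.length),
      u.get ⟨i + 1, hu⟩ ≤ v.get ⟨i, hv⟩)

/-- the finite set of type `D` inversion sequences: `e : Fin n → ℕ` with
`e i < 2(i+1)`. -/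
def invSeqs (n : ℕ) : Finset (Fin n → ℕ) :=
  ((Finset.univ : Finset (Fin n → Fin (2 * n + 1))).image
      (fun e => fun i => (e i : ℕ))).filter
    (fun e => ∀ i : Fin n, e i < 2 * ((i : ℕ) + 1))

/-- value of an inversion sequence at (0-indexed) position `i`. -/
def ev {n : ℕ} (e : Fin n → ℕ) (i : ℕ) : ℕ :=
  if h : i < n then e ⟨i, h⟩ else 0

/-- the type `D` ascent statistic:
`asc_D e = χ(e₁ + e₂/2 ≥ 3/2) + #{i ∈ [n-1] : eᵢ/i < eᵢ₊₁/(i+1)}`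
(1-indexed). -/
noncomputable def ascD {n : ℕ} (e : Fin n → ℕ) : ℕ :=
  (if 3 ≤ 2 * ev e 0 + ev e 1 then 1 else 0) +
    ((Finset.Ico 1 n).filter
      (fun i => (i + 1) * ev e (i - 1) < i * ev e i)).card

/-- `exc e = #{i : eᵢ ≥ i}` (1-indexed). -/
noncomputable def excD {n : ℕ} (e : Fin n → ℕ) : ℕ :=
  ((Finset.range n).filter (fun j => j + 1 ≤ ev e j)).card

/-- the affine type `D` ascent statistic:
`ãsc_D e = asc_D e + χ(e_{n-1}/(n-1) + e_n/n < (2n-1)/n)`. -/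
noncomputable def affAscD {n : ℕ} (e : Fin n → ℕ) : ℕ :=
  ascD e +
    (if n * ev e (n - 2) + (n - 1) * ev e (n - 1) < (n - 1) * (2 * n - 1)
      then 1 else 0)

/-- the refined Eulerian polynomial `T_{n,i}(x)` of type `D`. -/
noncomputable def TD (n i : ℕ) : Polynomial ℝ :=
  ∑ e ∈ (invSeqs n).filter (fun e => ev e (n - 1) = i), X ^ ascD e

/-- the refined `q`-Eulerian polynomial `T_{n,i}(x;q)` of type `D`. -/
noncomputable def TqD (n i : ℕ) (q : ℝ) : Polynomial ℝ :=
  ∑ e ∈ (invSeqs n).filter (fun e => ev e (n - 1) = i),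
    C q ^ excD e * X ^ ascD e

/-- the refined affine Eulerian polynomial `T̃_{n,i}(x)` of type `D`. -/
noncomputable def TtD (n i : ℕ) : Polynomial ℝ :=
  ∑ e ∈ (invSeqs n).filter (fun e => ev e (n - 1) = i), X ^ affAscD e

/-- the affine Eulerian polynomial `D̃ₙ(x)` of type `D`, defined via
`2·D̃ₙ(x) = Σ_{e} x^{ãsc_D e}`. -/
noncomputable def DtPoly (n : ℕ) : Polynomial ℝ :=
  C (1 / 2 : ℝ) * ∑ e ∈ invSeqs n, X ^ affAscD e

open Finset

lemma mem_invSeqs {n : ℕ} {e : Fin n → ℕ} :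
    e ∈ invSeqs n ↔ ∀ i : Fin n, e i < 2 * ((i : ℕ) + 1) := by
  refine ⟨fun he => (mem_filter.1 he).2, fun he => mem_filter.2 ⟨?_, he⟩⟩
  refine mem_image.2 ⟨fun i => ⟨e i, ?_⟩, mem_univ _, rfl⟩
  have := he i
  omega

section Snoc

variable {n : ℕ} (e : Fin n → ℕ) (k : ℕ)

lemma ev_snoc_of_lt {i : ℕ} (hi : i < n) :
    ev (Fin.snoc (α := fun _ => ℕ) e k) i = ev e i := by
  simp [ev, hi, Nat.lt_succ_of_lt hi, Fin.snoc, Fin.castLT]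

lemma ev_snoc_self : ev (Fin.snoc (α := fun _ => ℕ) e k) n = k := by
  simp [ev, Fin.snoc]

end Snoc

lemma snoc_mem_invSeqs {n : ℕ} {e : Fin n → ℕ} {k : ℕ} :
    Fin.snoc (α := fun _ => ℕ) e k ∈ invSeqs (n + 1) ↔ e ∈ invSeqs n ∧ k < 2 * (n + 1) := by
  simp only [mem_invSeqs, Fin.forall_fin_succ', Fin.snoc_castSucc, Fin.snoc_last,
    Fin.val_castSucc, Fin.val_last]

lemma sum_invSeqs_succ {M : Type*} [AddCommMonoid M] (n : ℕ) (f : (Fin (n + 1) → ℕ) → M) :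
    ∑ e ∈ invSeqs (n + 1), f e =
      ∑ e ∈ invSeqs n, ∑ k ∈ range (2 * (n + 1)), f (Fin.snoc e k) := by
  rw [← sum_product']
  refine sum_nbij' (fun e => (Fin.init e, e (Fin.last n)))
    (fun p => Fin.snoc p.1 p.2) ?_ ?_ ?_ ?_ ?_
  · intro e he
    simpa using snoc_mem_invSeqs.1 (by rwa [Fin.snoc_init_self])
  · rintro ⟨e, k⟩ h
    simpa [snoc_mem_invSeqs] using h
  · intro e _
    exact Fin.snoc_init_self e
  · rintro ⟨e, k⟩ _
    simp
  · intro e _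
    simp

lemma ascD_snoc {n : ℕ} (hn : 2 ≤ n) (e : Fin n → ℕ) (k : ℕ) :
    ascD (Fin.snoc (α := fun _ => ℕ) e k) =
      ascD e + if (n + 1) * ev e (n - 1) < n * k then 1 else 0 := by
  have hprev : ∀ i ∈ Ico 1 n,
      ((i + 1) * ev (Fin.snoc (α := fun _ => ℕ) e k) (i - 1) <
        i * ev (Fin.snoc (α := fun _ => ℕ) e k) i ↔ (i + 1) * ev e (i - 1) < i * ev e i) := by
    intro i hi
    rw [mem_Ico] at hi
    rw [ev_snoc_of_lt e k (by omega), ev_snoc_of_lt e k hi.2]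
  unfold ascD
  rw [ev_snoc_of_lt e k (by omega), ev_snoc_of_lt e k (by omega),
    Nat.Ico_succ_right_eq_insert_Ico (by omega), filter_insert,
    filter_congr hprev, ev_snoc_of_lt e k (by omega), ev_snoc_self]
  split_ifs <;> simp [card_insert_of_notMem, add_assoc]

lemma affAscD_snoc {n : ℕ} (hn : 2 ≤ n) (e : Fin n → ℕ) (k : ℕ) :
    affAscD (Fin.snoc (α := fun _ => ℕ) e k) = ascD e +
      ((if (n + 1) * ev e (n - 1) < n * k then 1 else 0) +
        if (n + 1) * ev e (n - 1) + n * k < n * (2 * n + 1) then 1 else 0) := by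
  rw [affAscD, ascD_snoc hn, show n + 1 - 2 = n - 1 by omega, Nat.add_sub_cancel,
    ev_snoc_of_lt e k (by omega), ev_snoc_self, show 2 * (n + 1) - 1 = 2 * n + 1 by omega,
    add_assoc]

lemma sum_range_eq_of_piecewise_const {M : Type*} [AddCommMonoid M] {a b c : ℕ}
    (hab : a ≤ b) (hbc : b ≤ c) (f : ℕ → M) (u v w : M) (hu : ∀ k < a, f k = u)
    (hv : ∀ k, a ≤ k → k < b → f k = v) (hw : ∀ k, b ≤ k → k < c → f k = w) :
    ∑ k ∈ range c, f k = a • u + (b - a) • v + (c - b) • w := by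
  rw [← sum_range_add_sum_Ico f hbc, ← sum_range_add_sum_Ico f hab,
    sum_congr rfl (fun k hk => hu k (mem_range.1 hk)),
    sum_congr rfl (fun k hk => hv k (mem_Ico.1 hk).1 (mem_Ico.1 hk).2),
    sum_congr rfl (fun k hk => hw k (mem_Ico.1 hk).1 (mem_Ico.1 hk).2)]
  simp

/-- The two ascents (at position `n` and the affine one) that appending `k` to a sequence
of length `n` ending in `j` adds to `ãsc_D`, summed over all admissible `k`. -/
noncomputable def snocWeight (n j : ℕ) : Polynomial ℝ :=
  ∑ k ∈ range (2 * (n + 1)),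
    X ^ ((if (n + 1) * j < n * k then 1 else 0) +
      if (n + 1) * j + n * k < n * (2 * n + 1) then 1 else 0)

lemma snocWeight_of_lt {n j : ℕ} (hj : j < n) :
    snocWeight n j = C 2 * X * (C ((n : ℝ) - j) * X + C ((j : ℝ) + 1)) := by
  rw [snocWeight, sum_range_eq_of_piecewise_const (a := j + 1) (b := 2 * n + 1 - j)
    (by omega) (by omega) _ X (X ^ 2) X]
  · rw [show 2 * (n + 1) - (2 * n + 1 - j) = j + 1 by omega,
      show 2 * n + 1 - j - (j + 1) = 2 * (n - j) by omega]
    simp only [nsmul_eq_mul, Nat.cast_add, Nat.cast_mul, Nat.cast_sub hj.le, C_add,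
      C_sub, map_natCast, map_one, map_ofNat]
    ring
  · intro k hk
    have : n * k ≤ n * j := Nat.mul_le_mul_left n (by omega)
    rw [if_neg (by nlinarith), if_pos (by nlinarith), zero_add, pow_one]
  · intro k hk₁ hk₂
    have : n * (j + 1) ≤ n * k := Nat.mul_le_mul_left n hk₁
    have : n * (k + j) ≤ n * (2 * n) := Nat.mul_le_mul_left n (by omega)
    rw [if_pos (by nlinarith), if_pos (by nlinarith)]
  · intro k hk₁ _
    have : n * (2 * n + 1) ≤ n * (k + j) := Nat.mul_le_mul_left n (by omega)
    have : n * (j + 1) ≤ n * k := Nat.mul_le_mul_left n (by omega)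
    rw [if_pos (by nlinarith), if_neg (by nlinarith), pow_one]

lemma snocWeight_add {n i : ℕ} (hi : i < n) :
    snocWeight n (n + i) = C 2 * (C ((n : ℝ) - i) * X + C ((i : ℝ) + 1)) := by
  rw [snocWeight, sum_range_eq_of_piecewise_const (a := n - i) (b := n + i + 2)
    (by omega) (by omega) _ X 1 X]
  · rw [show 2 * (n + 1) - (n + i + 2) = n - i by omega,
      show n + i + 2 - (n - i) = 2 * (i + 1) by omega]
    simp only [nsmul_eq_mul, Nat.cast_add, Nat.cast_mul, Nat.cast_sub hi.le, C_add,
      C_sub, map_natCast, map_one, map_ofNat, Nat.cast_one, Nat.cast_ofNat]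
    ring
  · intro k hk
    have : n * (k + i + 1) ≤ n * n := Nat.mul_le_mul_left n (by omega)
    rw [if_neg (by nlinarith), if_pos (by nlinarith), zero_add, pow_one]
  · intro k hk₁ hk₂
    have : n * n ≤ n * (k + i) := Nat.mul_le_mul_left n (by omega)
    have : n * k ≤ n * (n + i + 1) := Nat.mul_le_mul_left n (by omega)
    rw [if_neg (by nlinarith), if_neg (by nlinarith), pow_zero]
  · intro k hk₁ _
    have : n * (n + i + 2) ≤ n * k := Nat.mul_le_mul_left n hk₁
    rw [if_pos (by nlinarith), if_neg (by nlinarith), pow_one]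

lemma sum_invSeqs_X_pow_ascD_mul {n : ℕ} (hn : 0 < n) (f : ℕ → Polynomial ℝ) :
    ∑ e ∈ invSeqs n, X ^ ascD e * f (ev e (n - 1)) =
      ∑ j ∈ range (2 * n), TD n j * f j := by
  have hlast : ∀ e ∈ invSeqs n, ev e (n - 1) ∈ range (2 * n) := by
    intro e he
    have := mem_invSeqs.1 he ⟨n - 1, by omega⟩
    simp only [ev, dif_pos (by omega : n - 1 < n), mem_range]
    omega
  rw [← sum_fiberwise_of_maps_to hlast]
  refine sum_congr rfl fun j _ => ?_
  rw [TD, sum_mul]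
  exact sum_congr rfl fun e he => by rw [(mem_filter.1 he).2]

/-- Decomposition of the affine Eulerian polynomial of type `D`:
`D̃ₙ(x) = Σ_{i=0}^{n-2} ((n-i-1)x + i+1)(x·T_{n-1,i}(x) + T_{n-1,n+i-1}(x))`. -/
theorem Dtilde_decomposition (n : ℕ) (hn : 4 ≤ n) :
    DtPoly n = ∑ i ∈ Finset.range (n - 1),
      (C ((n : ℝ) - i - 1) * X + C ((i : ℝ) + 1)) *
        (X * TD (n - 1) i + TD (n - 1) (n + i - 1)) := by
  obtain ⟨n, rfl⟩ : ∃ m, n = m + 1 := ⟨n - 1, by omega⟩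
  have hhalf : C (1 / 2 : ℝ) * C 2 = 1 := by rw [← C_mul]; norm_num
  calc DtPoly (n + 1)
      = C (1 / 2) * ∑ j ∈ range (2 * n), TD n j * snocWeight n j := by
        rw [DtPoly, sum_invSeqs_succ, ← sum_invSeqs_X_pow_ascD_mul (by omega)]
        congr 1
        refine sum_congr rfl fun e _ => ?_
        simp only [affAscD_snoc (by omega : 2 ≤ n), pow_add, ← mul_sum, snocWeight]
    _ = C (1 / 2) * ∑ i ∈ range n,
          (TD n i * snocWeight n i + TD n (n + i) * snocWeight n (n + i)) := by
        rw [two_mul, sum_range_add, sum_add_distrib]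
    _ = _ := by
        rw [mul_sum, Nat.add_sub_cancel]
        refine sum_congr rfl fun i hi => ?_
        have hi : i < n := mem_range.1 hi
        rw [snocWeight_of_lt hi, snocWeight_add hi, show n + 1 + i - 1 = n + i by omega,
          show ((n + 1 : ℕ) : ℝ) - i - 1 = n - i by push_cast; ring]
        linear_combination (X * TD n i + TD n (n + i)) *
          (C ((n : ℝ) - i) * X + C ((i : ℝ) + 1)) * hhalf
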